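/- arXiv:2511.16866 — 2 statements merged into one kernel-verified Lean document; each statement's English description precedes it below -/
import Mathlib

section
/- For n ≥ 2, the subgroup b_n(3,(2²)) of degree-3 special derivations supported on words with two x_1's and two x_2's is free abelian of rank 1, generated by x_1^* ⊗ [x_2,x_1,x_2,x_1] + x_2^* ⊗ [x_1,x_2,x_1,x_2]. -/
open scoped TensorProduct

/-- The degree-`k` homogeneous part of the free Lie ring on `n` generators. -/
noncomputable def Ln (n : ℕ) : ℕ → Submodule ℤ (FreeLieAlgebra ℤ (Fin n))
  | 0 => ⊥
  | 1 => Submodule.span ℤ (Set.range (FreeLieAlgebra.of ℤ))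
  | (k+2) => Submodule.span ℤ
      {y | ∃ a ∈ Ln n (k+1), ∃ i : Fin n, y = ⁅a, FreeLieAlgebra.of ℤ i⁆}

/-- The tangential derivation module `p_n(k)`, in the representation
`H^* ⊗ L_n(k+1) ≅ (Fin n → L_n)` (the `i`-th component records `C_i` in
`Σᵢ x_i^* ⊗ C_i`), spanned by the elements `x_i^* ⊗ [c, x_i]` with `c ∈ L_n(k)`. -/
noncomputable def pnM (n k : ℕ) : Submodule ℤ (Fin n → FreeLieAlgebra ℤ (Fin n)) :=
  Submodule.span ℤ
    {f | ∃ i : Fin n, ∃ c ∈ Ln n k, f = Pi.single i ⁅c, FreeLieAlgebra.of ℤ i⁆}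

/-- Summation map sending `Σᵢ x_i^* ⊗ C_i` to `Σᵢ C_i`. -/
noncomputable def sumMap (n : ℕ) :
    (Fin n → FreeLieAlgebra ℤ (Fin n)) →ₗ[ℤ] FreeLieAlgebra ℤ (Fin n) :=
  LinearMap.lsum ℤ (fun _ : Fin n => FreeLieAlgebra ℤ (Fin n)) ℤ (fun _ => LinearMap.id)

/-!
Write `A = ⁅⁅⁅x₂, x₁⁆, x₂⁆, x₁⁆` and `B = ⁅⁅⁅x₁, x₂⁆, x₁⁆, x₂⁆`. The Jacobi identity gives
`B = -A`, so `s • (x₁^* ⊗ A) + t • (x₂^* ⊗ B)` sums to `(s - t) • A`, which vanishes iff `s = t`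
because `A` has infinite additive order. The latter is seen in a representation of the free
Lie ring by nilpotent `5 × 5` integer matrices.
-/

/-- Jacobi for `⁅a, b⁆, a, b`, using `⁅⁅a, b⁆, ⁅a, b⁆⁆ = 0`. -/
theorem lie_lie_lie_swap_eq_neg {L : Type*} [LieRing L] (a b : L) :
    ⁅⁅⁅a, b⁆, a⁆, b⁆ = -⁅⁅⁅b, a⁆, b⁆, a⁆ := by
  have h : ⁅⁅⁅a, b⁆, a⁆, b⁆ = ⁅⁅⁅a, b⁆, b⁆, a⁆ := by
    rw [lie_lie ⁅a, b⁆ a b, lie_self, zero_sub, lie_skew]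
  rw [h, ← lie_skew a b, neg_lie, neg_lie]

section PathRepresentation

attribute [local instance 100] LieRing.ofAssociativeRing

def pathMatrixX : Matrix (Fin 5) (Fin 5) ℤ :=
  !![0,0,0,0,0; 0,0,1,0,0; 0,0,0,0,0; 0,0,0,0,1; 0,0,0,0,0]

def pathMatrixY : Matrix (Fin 5) (Fin 5) ℤ :=
  !![0,1,0,0,0; 0,0,0,0,0; 0,0,0,1,0; 0,0,0,0,0; 0,0,0,0,0]

/-- `Y` and `X` are the alternate steps of the path `0 → 1 → 2 → 3 → 4`, so at entry `(0, 4)`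
only the word `YXYX` survives, and it occurs in `⁅⁅⁅Y, X⁆, Y⁆, X⁆` with coefficient `2`. -/
theorem lie_lie_lie_pathMatrix_apply_zero_four :
    ⁅⁅⁅pathMatrixY, pathMatrixX⁆, pathMatrixY⁆, pathMatrixX⁆ 0 4 = 2 := by
  simp [Ring.lie_def, pathMatrixX, pathMatrixY]

theorem FreeLieAlgebra.eq_zero_of_smul_lie_lie_lie_eq_zero {ι : Type*} [DecidableEq ι] {i j : ι}
    (hij : i ≠ j) {t : ℤ}
    (ht : t • ⁅⁅⁅of ℤ j, of ℤ i⁆, of ℤ j⁆, of ℤ i⁆ = (0 : FreeLieAlgebra ℤ ι)) : t = 0 := by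
  let φ := lift ℤ fun k : ι => if k = i then pathMatrixX else if k = j then pathMatrixY else 0
  have hX : φ (of ℤ i) = pathMatrixX := by simp [φ]
  have hY : φ (of ℤ j) = pathMatrixY := by simp [φ, hij.symm]
  have hφ : (t • φ ⁅⁅⁅of ℤ j, of ℤ i⁆, of ℤ j⁆, of ℤ i⁆) 0 4 = 0 := by
    rw [← map_smul, ht, map_zero, Matrix.zero_apply]
  simp only [LieHom.map_lie, hX, hY] at hφ
  rw [Matrix.smul_apply, lie_lie_lie_pathMatrix_apply_zero_four, smul_eq_mul] at hφ
  omega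

end PathRepresentation

section SumKernel

variable {R M ι : Type*} [CommRing R] [AddCommGroup M] [Module R M] [Fintype ι] [DecidableEq ι]

theorem span_pair_single_inf_ker_lsum {v : M} (hv : ∀ t : R, t • v = 0 → t = 0) (i j : ι) :
    Submodule.span R {Pi.single i v, Pi.single j (-v)} ⊓
        LinearMap.ker (LinearMap.lsum R (fun _ : ι => M) R fun _ => LinearMap.id) =
      Submodule.span R {Pi.single i v + Pi.single j (-v)} := by
  apply le_antisymm
  · intro p hp
    obtain ⟨hp, hsum⟩ := Submodule.mem_inf.mp hp
    obtain ⟨s, t, rfl⟩ := Submodule.mem_span_pair.mp hp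
    have hst : s = t := by
      refine sub_eq_zero.mp (hv _ ?_)
      rw [LinearMap.mem_ker] at hsum
      rw [sub_smul, sub_eq_add_neg]
      simpa only [map_add, map_smul, LinearMap.lsum_piSingle, LinearMap.id_apply, smul_neg]
        using hsum
    subst hst
    exact Submodule.mem_span_singleton.mpr ⟨s, smul_add s _ _⟩
  · refine Submodule.span_le.mpr (Set.singleton_subset_iff.mpr ⟨?_, ?_⟩)
    · exact add_mem (Submodule.subset_span (by simp)) (Submodule.subset_span (by simp))
    · exact LinearMap.mem_ker.mpr (by
        simp only [map_add, LinearMap.lsum_piSingle, LinearMap.id_apply, add_neg_cancel])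

theorem finrank_span_singleton_eq_one [StrongRankCondition R] {v : M}
    (hv : ∀ t : R, t • v = 0 → t = 0) : Module.finrank R (Submodule.span R {v}) = 1 := by
  simpa using finrank_span_set_eq_card (LinearIndepOn.singleton' (v := id) hv)

end SumKernel

/-- For `n ≥ 2`, the degree-3 special derivations supported on words with two `x₁`s and
two `x₂`s form a rank-one free abelian group generated by
`x₁^* ⊗ [x₂,x₁,x₂,x₁] + x₂^* ⊗ [x₁,x₂,x₁,x₂]`. -/
theorem bn_three_two_two (n : ℕ) (hn : 2 ≤ n) :
    let x : Fin n → FreeLieAlgebra ℤ (Fin n) := FreeLieAlgebra.of ℤ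
    let i0 : Fin n := ⟨0, by omega⟩
    let i1 : Fin n := ⟨1, by omega⟩
    let pα : Submodule ℤ (Fin n → FreeLieAlgebra ℤ (Fin n)) :=
      Submodule.span ℤ
        {Pi.single i0 ⁅⁅⁅x i1, x i0⁆, x i1⁆, x i0⁆,
         Pi.single i1 ⁅⁅⁅x i0, x i1⁆, x i0⁆, x i1⁆}
    let g : Fin n → FreeLieAlgebra ℤ (Fin n) :=
      Pi.single i0 ⁅⁅⁅x i1, x i0⁆, x i1⁆, x i0⁆ +
        Pi.single i1 ⁅⁅⁅x i0, x i1⁆, x i0⁆, x i1⁆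
    pα ⊓ LinearMap.ker (sumMap n) = Submodule.span ℤ {g} ∧
      Module.finrank ℤ ↥(pα ⊓ LinearMap.ker (sumMap n)) = 1 := by
  intro x i0 i1 pα g
  have hi : i0 ≠ i1 := by simp [i0, i1, Fin.ext_iff]
  have hA : ∀ t : ℤ, t • ⁅⁅⁅x i1, x i0⁆, x i1⁆, x i0⁆ = 0 → t = 0 := fun _ =>
    FreeLieAlgebra.eq_zero_of_smul_lie_lie_lie_eq_zero hi
  have hker : pα ⊓ LinearMap.ker (sumMap n) = Submodule.span ℤ {g} := by
    simp only [pα, g, lie_lie_lie_swap_eq_neg (x i0)]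
    exact span_pair_single_inf_ker_lsum hA i0 i1
  refine ⟨hker, hker ▸ finrank_span_singleton_eq_one fun t ht => hA t ?_⟩
  simpa [g, hi] using congrFun ht i0
end

section
/- For n ≥ 3 and odd k ≥ 3, and any indices j, i_1, i_2, …, i_{k-1} with j, i_1, i_2 pairwise distinct, twice the symmetric monomial x_j x_{i_1} ⋯ x_{i_{k-1}} ∈ S^k H lies in the image of the Morita trace MT_k restricted to the special derivation module b_n(k). -/
open FreeLieAlgebra

/-- Left-normed bracket `[x, xs₁, xs₂, …]`. -/
noncomputable def lnb {n : ℕ} (x : Fin n) (xs : List (Fin n)) : FreeLieAlgebra ℤ (Fin n) :=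
  xs.foldl (fun a j => ⁅a, FreeLieAlgebra.of ℤ j⁆) (FreeLieAlgebra.of ℤ x)

/-- The special derivation module `b_n(k)`. -/
noncomputable def bnM (n k : ℕ) : Submodule ℤ (Fin n → FreeLieAlgebra ℤ (Fin n)) :=
  pnM n k ⊓ LinearMap.ker (sumMap n)

attribute [local instance] LieRing.ofAssociativeRing

/-- The embedding of the free Lie ring into the tensor (free) algebra. -/
noncomputable def embT (n : ℕ) : FreeLieAlgebra ℤ (Fin n) →ₗ[ℤ] FreeAlgebra ℤ (Fin n) :=
  (FreeLieAlgebra.lift ℤ (fun i : Fin n => FreeAlgebra.ι ℤ i)).toLinearMap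

/-- The word `x_{j₁} ⊗ ⋯ ⊗ x_{j_m}` in the tensor algebra. -/
def wordT {n : ℕ} (L : List (Fin n)) : FreeAlgebra ℤ (Fin n) :=
  (L.map (FreeAlgebra.ι ℤ)).prod

/-- Contraction of the first tensor factor against `x_i^*`. -/
noncomputable def contractT (n : ℕ) (i : Fin n) :
    FreeAlgebra ℤ (Fin n) →ₗ[ℤ] FreeAlgebra ℤ (Fin n) :=
  (FreeAlgebra.basisFreeMonoid ℤ (Fin n)).constr ℤ fun w =>
    match FreeMonoid.toList w with
    | [] => 0
    | j :: rest => if j = i then wordT rest else 0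

/-- Abelianization of the tensor algebra, `T(H) → ⊕ₖ Sᵏ H`. -/
noncomputable def abelT (n : ℕ) : FreeAlgebra ℤ (Fin n) →ₐ[ℤ] MvPolynomial (Fin n) ℤ :=
  FreeAlgebra.lift ℤ (fun i : Fin n => MvPolynomial.X i)

/-- The Morita trace component at index `p`. -/
noncomputable def MTc (n : ℕ) (p : Fin n) :
    FreeLieAlgebra ℤ (Fin n) →ₗ[ℤ] MvPolynomial (Fin n) ℤ :=
  (abelT n).toLinearMap ∘ₗ contractT n p ∘ₗ embT n

/-- The full Morita trace on `H^* ⊗ L_n(k+1) ≅ (Fin n → L_n)`. -/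
noncomputable def MTfull (n : ℕ) :
    (Fin n → FreeLieAlgebra ℤ (Fin n)) →ₗ[ℤ] MvPolynomial (Fin n) ℤ :=
  LinearMap.lsum ℤ (fun _ : Fin n => FreeLieAlgebra ℤ (Fin n)) ℤ (fun p => MTc n p)


/-!
Contraction of the first tensor factor is a derivation twisted by the augmentation, and Lie
elements have no constant term, so each component of the Morita trace satisfies
`MTc p ⁅c, d⁆ = MTc p c * ab d - MTc p d * ab c` with `ab` the abelianization. As `ab` kills
brackets, only the innermost letters of a left-normed bracket contribute to its trace.

The witness uses `a = [x_{i₁}, …, x_{i_{k-1}}]` and `b = [x_j, x_{i₁}]`: the bracket `⁅a, b⁆` is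
`x_{i₁}^* ⊗ [a, x_j, x_{i₁}] - x_j^* ⊗ [a, x_{i₁}, x_j]`, while `⁅b, a⁆` is expanded into `p_n(k)` by
`[b, [c, x]] = [[b, c], x] - [[b, x], c]`, one letter of `a` at a time. The sum lies in `b_n(k)`
because `⁅a, b⁆ + ⁅b, a⁆ = 0`, and each part has trace the monomial `x_j x_{i₁} ⋯ x_{i_{k-1}}`,
the second one with sign `(-1)^(k-3) = 1`.
-/

section
variable {n : ℕ}

lemma basisFreeMonoid_eq_wordT (w : FreeMonoid (Fin n)) :
    FreeAlgebra.basisFreeMonoid ℤ (Fin n) w = wordT w.toList := by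
  simp only [FreeAlgebra.basisFreeMonoid, FreeAlgebra.equivMonoidAlgebraFreeMonoid,
    LinearEquiv.trans_symm, Module.Basis.map_apply, Finsupp.coe_basisSingleOne,
    LinearEquiv.trans_apply, MonoidAlgebra.coeffLinearEquiv_symm_apply,
    MonoidAlgebra.ofCoeff_single, AlgEquiv.coe_symm_toLinearEquiv,
    AlgEquiv.ofAlgHom_symm_apply, MonoidAlgebra.lift_single]
  exact (one_smul _ _).trans (FreeMonoid.lift_apply _ _)

lemma contractT_wordT (i : Fin n) (L : List (Fin n)) :
    contractT n i (wordT L) = match L with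
      | [] => 0
      | j :: rest => if j = i then wordT rest else 0 := by
  rw [← FreeMonoid.toList_ofList L, ← basisFreeMonoid_eq_wordT, contractT]
  erw [Module.Basis.constr_basis]

lemma contractT_one (i : Fin n) : contractT n i 1 = 0 :=
  contractT_wordT i []

lemma contractT_wordT_cons (i j : Fin n) (L : List (Fin n)) :
    contractT n i (wordT (j :: L)) = if j = i then wordT L else 0 :=
  contractT_wordT i (j :: L)

lemma contractT_ι_mul (i j : Fin n) (z : FreeAlgebra ℤ (Fin n)) :
    contractT n i (FreeAlgebra.ι ℤ j * z) = if j = i then z else 0 := by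
  have key : contractT n i ∘ₗ LinearMap.mulLeft ℤ (FreeAlgebra.ι ℤ j) =
      if j = i then LinearMap.id else 0 := by
    refine (FreeAlgebra.basisFreeMonoid ℤ (Fin n)).ext fun w => ?_
    show contractT n i (FreeAlgebra.ι ℤ j * _) = _
    rw [basisFreeMonoid_eq_wordT]
    erw [contractT_wordT_cons]
    split_ifs <;> rfl
  have := LinearMap.congr_fun key z
  split_ifs at this ⊢ <;> exact this

lemma contractT_mul (i : Fin n) (x y : FreeAlgebra ℤ (Fin n)) :
    contractT n i (x * y) =
      contractT n i x * y + FreeAlgebra.algebraMapInv x • contractT n i y := by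
  induction x using FreeAlgebra.induction generalizing y with
  | grade0 r =>
    have hsmul : ∀ z, contractT n i (algebraMap ℤ _ r * z) = r • contractT n i z := fun z => by
      rw [eq_intCast, ← zsmul_eq_mul, map_zsmul]
    have hr := hsmul 1
    rw [mul_one, contractT_one, smul_zero] at hr
    rw [hsmul, hr, FreeAlgebra.algebraMap_leftInverse, zero_mul, zero_add]
  | grade1 q =>
    have := contractT_ι_mul i q 1
    rw [mul_one] at this
    simp [contractT_ι_mul, this, FreeAlgebra.algebraMapInv]
  | mul a b ha hb =>
    rw [mul_assoc, ha, hb, ha b, map_mul]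
    simp only [add_mul, smul_mul_assoc, smul_add, mul_smul, mul_assoc]
    abel
  | add a b ha hb =>
    rw [add_mul, map_add, map_add, ha, hb, map_add, add_mul, add_smul]
    abel

lemma embT_of (q : Fin n) : embT n (of ℤ q) = FreeAlgebra.ι ℤ q :=
  lift_of_apply _ _

lemma embT_lie (c d : FreeLieAlgebra ℤ (Fin n)) :
    embT n ⁅c, d⁆ = embT n c * embT n d - embT n d * embT n c :=
  (LieHom.map_lie _ c d).trans (Ring.lie_def _ _)

lemma algebraMapInv_embT (c : FreeLieAlgebra ℤ (Fin n)) :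
    FreeAlgebra.algebraMapInv (embT n c) = 0 := by
  have : (FreeAlgebra.algebraMapInv (R := ℤ) (X := Fin n)).toLieHom.comp
      (lift ℤ fun i : Fin n => FreeAlgebra.ι ℤ i) = 0 :=
    hom_ext fun q => by
      show FreeAlgebra.algebraMapInv (embT n (of ℤ q)) = 0
      rw [embT_of, FreeAlgebra.algebraMapInv, FreeAlgebra.lift_ι_apply, Pi.zero_apply]
  exact LieHom.congr_fun this c

noncomputable def abelL (n : ℕ) : FreeLieAlgebra ℤ (Fin n) →ₗ[ℤ] MvPolynomial (Fin n) ℤ :=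
  (abelT n).toLinearMap ∘ₗ embT n

lemma abelL_lie (c d : FreeLieAlgebra ℤ (Fin n)) : abelL n ⁅c, d⁆ = 0 := by
  show abelT n (embT n ⁅c, d⁆) = 0
  rw [embT_lie, map_sub, map_mul, map_mul, mul_comm, sub_self]

lemma abelL_of (q : Fin n) : abelL n (of ℤ q) = MvPolynomial.X q := by
  show abelT n (embT n (of ℤ q)) = _
  rw [embT_of, abelT, FreeAlgebra.lift_ι_apply]

lemma MTc_lie (p : Fin n) (c d : FreeLieAlgebra ℤ (Fin n)) :
    MTc n p ⁅c, d⁆ = MTc n p c * abelL n d - MTc n p d * abelL n c := by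
  show abelT n (contractT n p (embT n ⁅c, d⁆)) =
    abelT n (contractT n p (embT n c)) * abelT n (embT n d) -
      abelT n (contractT n p (embT n d)) * abelT n (embT n c)
  simp only [embT_lie, map_sub, contractT_mul, algebraMapInv_embT, zero_smul, add_zero, map_mul]

lemma MTc_of (p q : Fin n) : MTc n p (of ℤ q) = if q = p then 1 else 0 := by
  show abelT n (contractT n p (embT n (of ℤ q))) = _
  rw [embT_of, ← mul_one (FreeAlgebra.ι ℤ q), contractT_ι_mul]
  split_ifs <;> simp

lemma MTc_lie_of (p q : Fin n) (c : FreeLieAlgebra ℤ (Fin n)) :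
    MTc n p ⁅c, of ℤ q⁆ = MTc n p c * MvPolynomial.X q - (if q = p then 1 else 0) * abelL n c := by
  rw [MTc_lie, abelL_of, MTc_of]

lemma MTc_lie_eq_zero (p : Fin n) {c d : FreeLieAlgebra ℤ (Fin n)} (hc : abelL n c = 0)
    (hd : abelL n d = 0) : MTc n p ⁅c, d⁆ = 0 := by
  rw [MTc_lie, hc, hd, mul_zero, mul_zero, sub_zero]

lemma MTfull_single (p : Fin n) (c : FreeLieAlgebra ℤ (Fin n)) :
    MTfull n (Pi.single p c) = MTc n p c := by
  simp [MTfull, Pi.single_apply, apply_ite]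

lemma sumMap_single (p : Fin n) (c : FreeLieAlgebra ℤ (Fin n)) :
    sumMap n (Pi.single p c) = c := by
  simp [sumMap, Pi.single_apply]

lemma lnb_append_singleton (q x : Fin n) (L : List (Fin n)) :
    lnb q (L ++ [x]) = ⁅lnb q L, of ℤ x⁆ := by
  rw [lnb, List.foldl_append, List.foldl_cons, List.foldl_nil, lnb]

lemma abelL_lnb_cons (q r : Fin n) (L : List (Fin n)) : abelL n (lnb q (r :: L)) = 0 := by
  induction L using List.reverseRecOn with
  | nil => exact abelL_lie _ _
  | append_singleton L x _ => rw [← List.cons_append, lnb_append_singleton, abelL_lie]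

lemma MTc_lnb_cons (p q r : Fin n) (L : List (Fin n)) :
    MTc n p (lnb q (r :: L)) =
      ((if q = p then 1 else 0) * MvPolynomial.X r - (if r = p then 1 else 0) * MvPolynomial.X q) *
        (L.map MvPolynomial.X).prod := by
  induction L using List.reverseRecOn with
  | nil =>
    show MTc n p ⁅of ℤ q, of ℤ r⁆ = _
    rw [MTc_lie_of, MTc_of, abelL_of, List.map_nil, List.prod_nil, mul_one]
  | append_singleton L x ih =>
    rw [← List.cons_append, lnb_append_singleton, MTc_lie_of, ih, abelL_lnb_cons, List.map_append,
      List.prod_append, mul_zero, sub_zero, List.map_singleton, List.prod_singleton, mul_assoc]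

lemma of_mem_Ln_one (q : Fin n) : of ℤ q ∈ Ln n 1 :=
  Submodule.subset_span ⟨q, rfl⟩

lemma lie_of_mem_Ln {m : ℕ} (hm : 1 ≤ m) {a : FreeLieAlgebra ℤ (Fin n)} (ha : a ∈ Ln n m)
    (x : Fin n) : ⁅a, of ℤ x⁆ ∈ Ln n (m + 1) := by
  obtain ⟨m, rfl⟩ : ∃ m', m = m' + 1 := ⟨m - 1, by omega⟩
  exact Submodule.subset_span ⟨a, ha, x, rfl⟩

lemma lnb_mem_Ln (q : Fin n) (L : List (Fin n)) : lnb q L ∈ Ln n (L.length + 1) := by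
  induction L using List.reverseRecOn with
  | nil => exact of_mem_Ln_one q
  | append_singleton L x ih =>
    rw [lnb_append_singleton, List.length_append, List.length_singleton]
    exact lie_of_mem_Ln (Nat.succ_pos _) ih x

lemma single_lie_of_mem_pnM {k : ℕ} (i : Fin n) {c : FreeLieAlgebra ℤ (Fin n)} (hc : c ∈ Ln n k) :
    Pi.single i ⁅c, of ℤ i⁆ ∈ pnM n k :=
  Submodule.subset_span ⟨i, c, hc, rfl⟩

lemma sumMap_mem_Ln_of_mem_pnM {k : ℕ} (hk : 1 ≤ k) {f : Fin n → FreeLieAlgebra ℤ (Fin n)}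
    (hf : f ∈ pnM n k) : sumMap n f ∈ Ln n (k + 1) := by
  refine (Submodule.span_le (p := (Ln n (k + 1)).comap (sumMap n)) |>.2 ?_) hf
  rintro _ ⟨i, c, hc, rfl⟩
  rw [SetLike.mem_coe, Submodule.mem_comap, sumMap_single]
  exact lie_of_mem_Ln hk hc i

-- The list is stored reversed, so that the recursion peels the last letter off `lnb q _`.
noncomputable def lieLnbLift (q : Fin n) :
    List (Fin n) → FreeLieAlgebra ℤ (Fin n) → (Fin n → FreeLieAlgebra ℤ (Fin n))
  | [], b => Pi.single q ⁅b, of ℤ q⁆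
  | x :: R, b => Pi.single x ⁅⁅b, lnb q R.reverse⁆, of ℤ x⁆ - lieLnbLift q R ⁅b, of ℤ x⁆

lemma sumMap_lieLnbLift (q : Fin n) (R : List (Fin n)) (b : FreeLieAlgebra ℤ (Fin n)) :
    sumMap n (lieLnbLift q R b) = ⁅b, lnb q R.reverse⁆ := by
  induction R generalizing b with
  | nil => rw [lieLnbLift, sumMap_single, List.reverse_nil, lnb]; rfl
  | cons x R ih =>
    rw [lieLnbLift, map_sub, sumMap_single, ih, List.reverse_cons, lnb_append_singleton,
      leibniz_lie b, ← lie_skew (lnb q R.reverse)]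
    abel

lemma lieLnbLift_mem_pnM (q : Fin n) (R : List (Fin n)) {m : ℕ} (hm : 1 ≤ m)
    {b : FreeLieAlgebra ℤ (Fin n)} (hb : b ∈ Ln n m) : lieLnbLift q R b ∈ pnM n (m + R.length) := by
  induction R generalizing m b with
  | nil => exact single_lie_of_mem_pnM q hb
  | cons x R ih =>
    have hsum := sumMap_mem_Ln_of_mem_pnM (by omega) (ih hm hb)
    rw [sumMap_lieLnbLift] at hsum
    rw [lieLnbLift, List.length_cons, ← add_assoc]
    refine sub_mem (single_lie_of_mem_pnM x hsum) ?_
    rw [add_right_comm]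
    exact ih (by omega) (lie_of_mem_Ln hm hb x)

lemma MTfull_lieLnbLift (q r : Fin n) (L : List (Fin n)) {b : FreeLieAlgebra ℤ (Fin n)}
    (hb : abelL n b = 0) :
    MTfull n (lieLnbLift q (r :: L).reverse b) = (-1) ^ L.length *
      ((MTc n r b - MTc n q b) * MvPolynomial.X q * MvPolynomial.X r *
        (L.map MvPolynomial.X).prod) := by
  induction L using List.reverseRecOn generalizing b with
  | nil =>
    simp only [List.reverse_singleton, lieLnbLift, List.reverse_nil, map_sub, MTfull_single]
    rw [lnb, List.foldl_nil, MTc_lie_of, MTc_lie_of, MTc_lie_of, MTc_lie_of, abelL_lie, abelL_lie, hb]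
    simp only [mul_zero, sub_zero, List.length_nil, pow_zero, List.map_nil, List.prod_nil]
    ring
  | append_singleton L x ih =>
    rw [← List.cons_append, List.reverse_append, List.reverse_singleton, List.singleton_append,
      lieLnbLift, List.reverse_reverse, map_sub, MTfull_single, ih (abelL_lie b (of ℤ x)),
      MTc_lie_of, MTc_lie_eq_zero x hb (abelL_lnb_cons q r L), abelL_lie, MTc_lie_of, MTc_lie_of, hb]
    simp only [List.length_append, List.length_singleton, List.map_append, List.prod_append,
      List.map_singleton, List.prod_singleton]
    ring

-- With `a = [x_{i₁}, x_{i₂}, …]` and `b = [x_j, x_{i₁}]`, the first two terms sum to `⁅a, b⁆`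
-- and the last one to `⁅b, a⁆`.
noncomputable def moritaWitness (j i₁ i₂ : Fin n) (rest : List (Fin n)) :
    Fin n → FreeLieAlgebra ℤ (Fin n) :=
  Pi.single i₁ ⁅⁅lnb i₁ (i₂ :: rest), of ℤ j⁆, of ℤ i₁⁆ -
    Pi.single j ⁅⁅lnb i₁ (i₂ :: rest), of ℤ i₁⁆, of ℤ j⁆ +
      lieLnbLift i₁ (i₂ :: rest).reverse ⁅of ℤ j, of ℤ i₁⁆

lemma moritaWitness_mem_bnM (j i₁ i₂ : Fin n) (rest : List (Fin n)) :
    moritaWitness j i₁ i₂ rest ∈ bnM n (rest.length + 3) := by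
  have ha := lnb_mem_Ln i₁ (i₂ :: rest)
  have hb : ⁅of ℤ j, of ℤ i₁⁆ ∈ Ln n 2 := lie_of_mem_Ln le_rfl (of_mem_Ln_one j) i₁
  refine ⟨add_mem (sub_mem ?_ ?_) ?_, ?_⟩
  · exact single_lie_of_mem_pnM i₁ (lie_of_mem_Ln (by simp) ha j)
  · exact single_lie_of_mem_pnM j (lie_of_mem_Ln (by simp) ha i₁)
  · have := lieLnbLift_mem_pnM i₁ (i₂ :: rest).reverse (by norm_num) hb
    rwa [List.length_reverse, List.length_cons, add_comm, add_assoc] at this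
  · set a := lnb i₁ (i₂ :: rest)
    have hjacobi : ⁅⁅a, of ℤ j⁆, of ℤ i₁⁆ - ⁅⁅a, of ℤ i₁⁆, of ℤ j⁆ = ⁅a, ⁅of ℤ j, of ℤ i₁⁆⁆ := by
      rw [leibniz_lie, ← lie_skew (of ℤ j)]
      abel
    rw [SetLike.mem_coe, LinearMap.mem_ker, moritaWitness, map_add, map_sub, sumMap_single,
      sumMap_single, sumMap_lieLnbLift, List.reverse_reverse, hjacobi, ← lie_skew a,
      neg_add_cancel]

lemma MTfull_moritaWitness {j i₁ i₂ : Fin n} {rest : List (Fin n)} (hrest : Even rest.length)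
    (h₁ : j ≠ i₁) (h₂ : j ≠ i₂) (h₁₂ : i₁ ≠ i₂) :
    MTfull n (moritaWitness j i₁ i₂ rest) = 2 * (MvPolynomial.X j * (MvPolynomial.X i₁ *
      (MvPolynomial.X i₂ * (rest.map MvPolynomial.X).prod))) := by
  rw [moritaWitness, map_add, map_sub, MTfull_single, MTfull_single,
    MTfull_lieLnbLift i₁ i₂ rest (abelL_lie _ _), MTc_lie_of, MTc_lie_of, MTc_lie_of,
    MTc_lie_of, abelL_lie, abelL_lie, abelL_lnb_cons, MTc_lnb_cons, MTc_lnb_cons, MTc_lie_of,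
    MTc_lie_of, MTc_of, MTc_of, abelL_of, hrest.neg_one_pow]
  simp only [↓reduceIte, if_neg h₁, if_neg h₂, if_neg h₁.symm, if_neg h₂.symm, if_neg h₁₂,
    if_neg h₁₂.symm]
  ring

end

/-- For `n ≥ 3`, odd `k ≥ 3`, and indices `j, i₁, …, i_{k-1}` with `j, i₁, i₂` pairwise
distinct, twice the monomial `x_j x_{i₁} ⋯ x_{i_{k-1}}` lies in the image of the Morita
trace restricted to the special derivation module `b_n(k)`. -/
theorem two_monomial_in_morita_image (n k : ℕ) (h3 : 3 ≤ k) (hk : Odd k)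
    (j : Fin n) (is : Fin (k - 1) → Fin n)
    (h1 : j ≠ is ⟨0, by omega⟩) (h2 : j ≠ is ⟨1, by omega⟩)
    (h12 : is ⟨0, by omega⟩ ≠ is ⟨1, by omega⟩) :
    ∃ f ∈ bnM n k, MTfull n f =
      2 * (MvPolynomial.X j * ∏ t : Fin (k - 1), MvPolynomial.X (is t)) := by
  obtain ⟨m, rfl⟩ : ∃ m, k = m + 3 := ⟨k - 3, by omega⟩
  set rest := List.ofFn fun t : Fin m => is ⟨t + 2, by omega⟩
  have hlen : rest.length = m := List.length_ofFn
  have heven : Even rest.length := by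
    obtain ⟨t, ht⟩ := hk
    exact ⟨t - 1, by omega⟩
  have hprod : (∏ t : Fin (m + 3 - 1), MvPolynomial.X (is t) : MvPolynomial (Fin n) ℤ) =
      MvPolynomial.X (is ⟨0, by omega⟩) *
        (MvPolynomial.X (is ⟨1, by omega⟩) * (rest.map MvPolynomial.X).prod) := by
    rw [List.map_ofFn, List.prod_ofFn]
    exact (Fin.prod_univ_succ (n := m + 1) _).trans (congrArg _ (Fin.prod_univ_succ (n := m) _))
  refine ⟨moritaWitness j (is ⟨0, by omega⟩) (is ⟨1, by omega⟩) rest,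
    hlen ▸ moritaWitness_mem_bnM j _ _ rest, ?_⟩
  rw [MTfull_moritaWitness heven h1 h2 h12, hprod]
end
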